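/- arXiv:2407.17200 — 2 statements merged into one kernel-verified Lean document; each statement's English description precedes it below -/
import Mathlib

section
/- Let d ≥ 1, let u : ℝ^d → ℝ be integrable and bounded with ‖u‖_∞ := sup_{v∈ℝ^d} |u(v)|, let σ > 0, and let Z be a standard Gaussian random vector in ℝ^d (law N(0, I_d)). Then the function G : ℝ^d → ℝ defined by G(w) := E[u(w + σ·Z)] is Lipschitz continuous with Lipschitz constant √d·‖u‖_∞/σ. -/
/-!
Write `G w = ∫ φ z * u (w + σ z) dz` with `φ` the standard Gaussian density. Substituting
`z ↦ z + a` with `a = (w' - w) / σ` gives `G w - G w' = ∫ (φ (z + a) - φ z) * u (w' + σ z) dz`,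
so `|G w - G w'| ≤ ‖u‖_∞ * ‖φ (· + a) - φ‖₁`. Integrating `Dφ` along the segments `[z, z + a]`
and using Fubini and translation invariance, `‖φ (· + a) - φ‖₁ ≤ ‖a‖ * ∫ ‖Dφ‖`, and
`∫ ‖Dφ z‖ dz = E ‖Z‖ ≤ √(E ‖Z‖²) = √d` since `‖Dφ z‖ = ‖z‖ φ z`.
-/

open MeasureTheory Metric Real

noncomputable section

/-- Density of the Gaussian measure `N(0, σ²·I_d)` on `ℝ^d`. -/
def gaussDensity (d : ℕ) (σ : ℝ) (v : EuclideanSpace ℝ (Fin d)) : ℝ :=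
  (2 * π * σ ^ 2) ^ (-(d : ℝ) / 2) * Real.exp (-‖v‖ ^ 2 / (2 * σ ^ 2))

/-- The Gaussian measure `N(0, σ²·I_d)` on `ℝ^d`. -/
def gaussMeasure (d : ℕ) (σ : ℝ) : Measure (EuclideanSpace ℝ (Fin d)) :=
  volume.withDensity fun v => ENNReal.ofReal (gaussDensity d σ v)

open ProbabilityTheory Set

section LineIntegral

variable {E F : Type*} [NormedAddCommGroup E] [NormedSpace ℝ E]
  [NormedAddCommGroup F] [NormedSpace ℝ F] [CompleteSpace F] {f : E → F}

theorem ContDiff.enorm_add_sub_le_lintegral (hf : ContDiff ℝ 1 f) (z a : E) :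
    ‖f (z + a) - f z‖ₑ ≤ ‖a‖ₑ * ∫⁻ t in Ioc (0 : ℝ) 1, ‖fderiv ℝ f (z + t • a)‖ₑ := by
  have hline : ∀ t : ℝ, HasDerivAt (fun s : ℝ => f (z + s • a)) (fderiv ℝ f (z + t • a) a) t := by
    intro t
    have hpath := ((hasDerivAt_id t).smul_const a).const_add z
    rw [one_smul] at hpath
    exact ((hf.differentiable one_ne_zero) (z + t • a)).hasFDerivAt.comp_hasDerivAt t hpath
  have hcont : Continuous fun t : ℝ => fderiv ℝ f (z + t • a) a :=
    ((hf.continuous_fderiv one_ne_zero).comp (by fun_prop)).clm_apply continuous_const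
  have hftc := intervalIntegral.integral_eq_sub_of_hasDerivAt (fun t _ => hline t)
    (hcont.intervalIntegrable 0 1)
  simp only [one_smul, zero_smul, add_zero] at hftc
  rw [← hftc, intervalIntegral.integral_of_le zero_le_one, ← lintegral_const_mul' _ _ enorm_ne_top]
  refine (enorm_integral_le_lintegral_enorm _).trans (lintegral_mono fun t => ?_)
  rw [mul_comm]
  exact ContinuousLinearMap.le_opENorm _ _

variable [MeasurableSpace E] [BorelSpace E] (μ : Measure E) [μ.IsAddRightInvariant] [SFinite μ]

theorem ContDiff.lintegral_enorm_comp_add_sub_le (hf : ContDiff ℝ 1 f) (a : E) :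
    ∫⁻ z, ‖f (z + a) - f z‖ₑ ∂μ ≤ ‖a‖ₑ * ∫⁻ z, ‖fderiv ℝ f z‖ₑ ∂μ := by
  have hmeas : Measurable fun p : E × ℝ => ‖fderiv ℝ f (p.1 + p.2 • a)‖ₑ :=
    ((hf.continuous_fderiv one_ne_zero).enorm.comp (by fun_prop)).measurable
  calc ∫⁻ z, ‖f (z + a) - f z‖ₑ ∂μ
      ≤ ∫⁻ z, ‖a‖ₑ * (∫⁻ t in Ioc (0 : ℝ) 1, ‖fderiv ℝ f (z + t • a)‖ₑ) ∂μ :=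
        lintegral_mono fun z => hf.enorm_add_sub_le_lintegral z a
    _ = ‖a‖ₑ * ∫⁻ t in Ioc (0 : ℝ) 1, ∫⁻ z, ‖fderiv ℝ f (z + t • a)‖ₑ ∂μ := by
        rw [lintegral_const_mul' _ _ enorm_ne_top,
          lintegral_lintegral_swap hmeas.aemeasurable]
    _ = ‖a‖ₑ * ∫⁻ z, ‖fderiv ℝ f z‖ₑ ∂μ := by
        simp_rw [lintegral_add_right_eq_self (fun z => ‖fderiv ℝ f z‖ₑ)]
        simp

end LineIntegral

section Smoothing

variable {E : Type*} [NormedAddCommGroup E] [NormedSpace ℝ E] [FiniteDimensional ℝ E]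
  [MeasurableSpace E] [BorelSpace E] (μ : Measure E) [μ.IsAddHaarMeasure]

theorem abs_integral_mul_comp_smul_sub_le {φ u : E → ℝ} {M L σ : ℝ} (hφ : Integrable φ μ)
    (hu : AEStronglyMeasurable u μ) (hM : ∀ v, |u v| ≤ M) (hL : 0 ≤ L)
    (hφL : ∀ a, ∫⁻ z, ‖φ (z + a) - φ z‖ₑ ∂μ ≤ ENNReal.ofReal L * ‖a‖ₑ) (hσ : 0 < σ) (w w' : E) :
    |∫ z, φ z * u (w + σ • z) ∂μ - ∫ z, φ z * u (w' + σ • z) ∂μ| ≤ M * L / σ * ‖w - w'‖ := by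
  have hM0 : 0 ≤ M := (abs_nonneg _).trans (hM 0)
  have hcomp (v : E) : AEStronglyMeasurable (fun z => u (v + σ • z)) μ :=
    hu.comp_quasiMeasurePreserving ((measurePreserving_add_left μ v).quasiMeasurePreserving.comp
      (Measure.quasiMeasurePreserving_smul μ hσ.ne'))
  have hint (v b : E) : Integrable (fun z => φ (z + b) * u (v + σ • z)) μ :=
    (hφ.comp_add_right b).mul_bdd (hcomp v) (ae_of_all _ fun z => hM _)
  set a := σ⁻¹ • (w' - w)
  have hshift : ∫ z, φ z * u (w + σ • z) ∂μ = ∫ z, φ (z + a) * u (w' + σ • z) ∂μ := by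
    rw [← integral_add_right_eq_self _ a]
    congr with z
    rw [smul_add, smul_inv_smul₀ hσ.ne']
    abel_nf
  have hdiff : ∫ z, φ z * u (w + σ • z) ∂μ - ∫ z, φ z * u (w' + σ • z) ∂μ
      = ∫ z, (φ (z + a) - φ z) * u (w' + σ • z) ∂μ := by
    rw [hshift, ← integral_sub (hint w' a) (by simpa using hint w' 0)]
    simp_rw [sub_mul]
  have hnorm_a : ‖a‖ = ‖w - w'‖ / σ := by
    rw [norm_smul, norm_inv, Real.norm_of_nonneg hσ.le, norm_sub_rev, inv_mul_eq_div]
  rw [← ENNReal.ofReal_le_ofReal_iff (by positivity), ← enorm_eq_ofReal_abs, hdiff]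
  calc ‖∫ z, (φ (z + a) - φ z) * u (w' + σ • z) ∂μ‖ₑ
      ≤ ∫⁻ z, ‖φ (z + a) - φ z‖ₑ * ENNReal.ofReal M ∂μ := by
        refine (enorm_integral_le_lintegral_enorm _).trans (lintegral_mono fun z => ?_)
        rw [enorm_mul, enorm_eq_ofReal_abs (u _)]
        gcongr
        exact hM _
    _ ≤ ENNReal.ofReal L * ‖a‖ₑ * ENNReal.ofReal M := by
        rw [lintegral_mul_const' _ _ ENNReal.ofReal_ne_top]
        gcongr
        exact hφL a
    _ = ENNReal.ofReal (M * L / σ * ‖w - w'‖) := by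
        rw [← ofReal_norm, ← ENNReal.ofReal_mul hL, ← ENNReal.ofReal_mul (by positivity), hnorm_a]
        ring_nf

end Smoothing

section StdGaussian

variable {ι : Type*} [Fintype ι]

lemma integral_norm_sq_stdGaussian :
    ∫ x, ‖x‖ ^ 2 ∂stdGaussian (EuclideanSpace ℝ ι) = Fintype.card ι := by
  classical
  have hcoord (i : ι) :
      MeasurePreserving (fun x : EuclideanSpace ℝ ι => x i) (stdGaussian _) (gaussianReal 0 1) := by
    simpa using measurePreserving_eval_multivariateGaussian (μ := 0) (S := 1) (i := i)
      Matrix.PosSemidef.one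
  have hsq : ∫ y, y ^ 2 ∂gaussianReal 0 1 = 1 := by
    rw [← variance_of_integral_eq_zero (X := fun y => y) aemeasurable_id' integral_id_gaussianReal]
    simp [variance_fun_id_gaussianReal]
  have hint : Integrable (fun y : ℝ => y ^ 2) (gaussianReal 0 1) :=
    (memLp_id_gaussianReal 2).integrable_sq
  have hint_coord (i : ι) : Integrable (fun x : EuclideanSpace ℝ ι => x i ^ 2) (stdGaussian _) :=
    (hcoord i).integrable_comp_of_integrable hint
  have hcoord_sq (i : ι) : ∫ x, x i ^ 2 ∂stdGaussian (EuclideanSpace ℝ ι) = 1 := by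
    rw [← hsq, ← (hcoord i).map_eq, integral_map (by fun_prop) (by fun_prop)]
  simp_rw [EuclideanSpace.real_norm_sq_eq]
  rw [integral_finsetSum _ fun i _ => hint_coord i]
  simp [hcoord_sq]

lemma integral_norm_stdGaussian_le :
    ∫ x, ‖x‖ ∂stdGaussian (EuclideanSpace ℝ ι) ≤ √(Fintype.card ι) := by
  have hvar :=
    variance_eq_sub (IsGaussian.memLp_two_id (μ := stdGaussian (EuclideanSpace ℝ ι))).norm
  rw [← integral_norm_sq_stdGaussian]
  refine Real.le_sqrt_of_sq_le ?_
  have hvar_nonneg := variance_nonneg (fun x : EuclideanSpace ℝ ι => ‖x‖) (stdGaussian _)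
  simp only [Pi.pow_apply, id] at hvar
  linarith

end StdGaussian

section GaussDensity

variable {d : ℕ}

lemma gaussDensity_one_apply (v : EuclideanSpace ℝ (Fin d)) :
    gaussDensity d 1 v = (2 * π) ^ (-(d : ℝ) / 2) * rexp (-(1 / 2) * ‖v‖ ^ 2) := by
  simp only [gaussDensity]; ring_nf

lemma gaussDensity_one_nonneg (v : EuclideanSpace ℝ (Fin d)) : 0 ≤ gaussDensity d 1 v := by
  rw [gaussDensity_one_apply]; positivity

lemma hasFDerivAt_gaussDensity_one (v : EuclideanSpace ℝ (Fin d)) :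
    HasFDerivAt (gaussDensity d 1) (-gaussDensity d 1 v • innerSL ℝ v) v := by
  have h := (((hasFDerivAt_id v).norm_sq.const_mul (-(1 / 2) : ℝ)).exp).const_mul
    ((2 * π) ^ (-(d : ℝ) / 2))
  rw [funext gaussDensity_one_apply]
  refine h.congr_fderiv (ContinuousLinearMap.ext fun x => ?_)
  simp only [id_eq, ContinuousLinearMap.comp_id, smul_apply, coe_innerSL_apply,
    nsmul_eq_mul, smul_eq_mul]
  ring

lemma contDiff_gaussDensity_one : ContDiff ℝ 1 (gaussDensity d 1) := by
  rw [funext gaussDensity_one_apply]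
  exact contDiff_const.mul ((contDiff_const.mul (contDiff_norm_sq ℝ)).exp)

lemma enorm_fderiv_gaussDensity_one (v : EuclideanSpace ℝ (Fin d)) :
    ‖fderiv ℝ (gaussDensity d 1) v‖ₑ = ENNReal.ofReal (gaussDensity d 1 v) * ‖v‖ₑ := by
  rw [(hasFDerivAt_gaussDensity_one v).fderiv, enorm_smul, enorm_neg,
    Real.enorm_of_nonneg (gaussDensity_one_nonneg v), ← ofReal_norm (innerSL ℝ v),
    innerSL_apply_norm, ofReal_norm]

lemma integrable_gaussDensity_one : Integrable (gaussDensity d 1) := by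
  have h := (GaussianFourier.integrable_cexp_neg_mul_sq_norm_add
    (V := EuclideanSpace ℝ (Fin d)) (b := (1 / 2 : ℂ)) (by norm_num) 0 0).norm
  rw [funext gaussDensity_one_apply]
  refine Integrable.const_mul ?_ _
  convert h using 2 with v
  rw [Complex.norm_exp]
  simp [← Complex.ofReal_pow]

instance : IsFiniteMeasure (gaussMeasure d 1) :=
  isFiniteMeasure_withDensity_ofReal integrable_gaussDensity_one.2

lemma integral_gaussMeasure_one {F : Type*} [NormedAddCommGroup F] [NormedSpace ℝ F]
    (f : EuclideanSpace ℝ (Fin d) → F) :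
    ∫ z, f z ∂gaussMeasure d 1 = ∫ z, gaussDensity d 1 z • f z := by
  rw [gaussMeasure, integral_withDensity_eq_integral_toReal_smul
    contDiff_gaussDensity_one.continuous.measurable.ennreal_ofReal (by simp)]
  simp_rw [ENNReal.toReal_ofReal (gaussDensity_one_nonneg _)]

lemma gaussMeasure_one_eq_stdGaussian :
    gaussMeasure d 1 = stdGaussian (EuclideanSpace ℝ (Fin d)) := by
  refine Measure.ext_of_charFun (funext fun t => ?_)
  rw [charFun_apply, integral_gaussMeasure_one, charFun_stdGaussian]
  have h := GaussianFourier.integral_cexp_neg_mul_sq_norm_add (V := EuclideanSpace ℝ (Fin d))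
    (b := (1 / 2 : ℂ)) (by norm_num) Complex.I t
  simp_rw [gaussDensity_one_apply, Complex.real_smul, Complex.ofReal_mul, mul_assoc]
  rw [integral_const_mul]
  convert congrArg (fun z : ℂ => (((2 * π) ^ (-(d : ℝ) / 2) : ℝ) : ℂ) * z) h using 1
  · congr 1
    refine integral_congr_ae (Filter.Eventually.of_forall fun x => ?_)
    simp only
    rw [Complex.ofReal_exp, ← Complex.exp_add]
    congr 1
    push_cast
    rw [real_inner_comm]
    ring
  · rw [finrank_euclideanSpace_fin, Complex.I_sq]
    have h2π : (π : ℂ) / (1 / 2) = ((2 * π : ℝ) : ℂ) := by push_cast; ring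
    rw [h2π, ← Complex.ofReal_natCast, ← Complex.ofReal_ofNat, ← Complex.ofReal_div,
      ← Complex.ofReal_cpow (by positivity), ← mul_assoc, ← Complex.ofReal_mul,
      ← Real.rpow_add (by positivity)]
    simp only [neg_div, neg_add_cancel, Real.rpow_zero, Complex.ofReal_one, one_mul]
    congr 1
    push_cast
    ring

lemma lintegral_enorm_gaussDensity_one_add_sub_le (a : EuclideanSpace ℝ (Fin d)) :
    ∫⁻ z, ‖gaussDensity d 1 (z + a) - gaussDensity d 1 z‖ₑ ≤ ENNReal.ofReal √d * ‖a‖ₑ := by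
  have hmoment : ∫⁻ z, ‖fderiv ℝ (gaussDensity d 1) z‖ₑ = ∫⁻ z, ‖z‖ₑ ∂gaussMeasure d 1 := by
    simp_rw [enorm_fderiv_gaussDensity_one]
    rw [gaussMeasure, lintegral_withDensity_eq_lintegral_mul _
      contDiff_gaussDensity_one.continuous.measurable.ennreal_ofReal measurable_enorm]
    rfl
  refine (contDiff_gaussDensity_one.lintegral_enorm_comp_add_sub_le volume a).trans ?_
  rw [mul_comm, hmoment, gaussMeasure_one_eq_stdGaussian, ← ofReal_integral_norm_eq_lintegral_enorm
    IsGaussian.integrable_fun_id]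
  gcongr
  simpa using integral_norm_stdGaussian_le (ι := Fin d)

end GaussDensity

theorem statement0_general (d : ℕ) (σ : ℝ) (hσ : 0 < σ)
    (u : EuclideanSpace ℝ (Fin d) → ℝ)
    (hu_int : Integrable u (volume : Measure (EuclideanSpace ℝ (Fin d))))
    (hu_bdd : BddAbove (Set.range fun v => |u v|))
    (G : EuclideanSpace ℝ (Fin d) → ℝ)
    (hG : ∀ w, G w = ∫ z, u (w + σ • z) ∂(gaussMeasure d 1)) :
    ∀ w w', |G w - G w'| ≤ Real.sqrt d * (⨆ v, |u v|) / σ * ‖w - w'‖ := by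
  intro w w'
  have hG_density (v : EuclideanSpace ℝ (Fin d)) :
      G v = ∫ z, gaussDensity d 1 z * u (v + σ • z) := by
    rw [hG, integral_gaussMeasure_one]
    rfl
  rw [hG_density, hG_density, mul_comm (Real.sqrt d)]
  exact abs_integral_mul_comp_smul_sub_le volume integrable_gaussDensity_one hu_int.1
    (fun v => le_ciSup hu_bdd v) (Real.sqrt_nonneg _) lintegral_enorm_gaussDensity_one_add_sub_le
    hσ w w'

/-- If `u : ℝ^d → ℝ` is integrable and bounded and `Z` is a standard Gaussian vector in
`ℝ^d`, then `G(w) := E[u(w + σ·Z)]` is `√d·‖u‖_∞/σ`-Lipschitz. -/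
theorem statement0 (d : ℕ) (hd : 1 ≤ d) (σ : ℝ) (hσ : 0 < σ)
    (u : EuclideanSpace ℝ (Fin d) → ℝ)
    (hu_int : Integrable u (volume : Measure (EuclideanSpace ℝ (Fin d))))
    (hu_bdd : BddAbove (Set.range fun v => |u v|))
    (G : EuclideanSpace ℝ (Fin d) → ℝ)
    (hG : ∀ w, G w = ∫ z, u (w + σ • z) ∂(gaussMeasure d 1)) :
    ∀ w w', |G w - G w'| ≤ Real.sqrt d * (⨆ v, |u v|) / σ * ‖w - w'‖ :=
  statement0_general d σ hσ u hu_int hu_bdd G hG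
end
end

section
/- Let d ≥ 1, σ > 0, and let h_σ : ℝ^d → ℝ be the density of the Gaussian measure N(0, σ²·I_d) on ℝ^d. Then for all θ, θ' ∈ ℝ^d, ∫_{ℝ^d} |h_σ(v − θ) − h_σ(v − θ')| dv ≤ (√d/σ)·‖θ − θ'‖₂. -/
/-!
By the fundamental theorem of calculus along the segment from `θ'` to `θ`, Tonelli and
translation invariance of Lebesgue measure, the `L¹` distance between two translates of a `C¹`
function is at most the `L¹` norm of its derivative in the direction `Δ = θ' - θ`. For the
Gaussian density this derivative is `-σ⁻² ⟪v, Δ⟫ h_σ(v)`, and `h_σ` is the density of `σ X`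
with `X` standard Gaussian (the characteristic functions agree), so the `L¹` norm equals
`σ⁻¹ E|⟪Δ, X⟫| ≤ σ⁻¹ (E ⟪Δ, X⟫²)^{1/2} = ‖Δ‖ / σ`, which is at most `√d ‖Δ‖ / σ`.
-/

open MeasureTheory Metric Real

noncomputable section

open ProbabilityTheory
open scoped RealInnerProductSpace

section Translation

variable {E : Type*} [NormedAddCommGroup E] [NormedSpace ℝ E]

theorem sub_eq_integral_fderiv_segment {f : E → ℝ} (hf : ContDiff ℝ 1 f) (x y : E) :
    f y - f x = ∫ t in (0 : ℝ)..1, fderiv ℝ f (x + t • (y - x)) (y - x) := by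
  have hderiv (t : ℝ) : HasDerivAt (fun t : ℝ ↦ f (x + t • (y - x)))
      (fderiv ℝ f (x + t • (y - x)) (y - x)) t := by
    have hline : HasDerivAt (fun t : ℝ ↦ x + t • (y - x)) (y - x) t := by
      simpa using ((hasDerivAt_id t).smul_const (y - x)).const_add x
    exact ((hf.differentiable one_ne_zero _).hasFDerivAt).comp_hasDerivAt t hline
  have hcont : Continuous fun t : ℝ ↦ fderiv ℝ f (x + t • (y - x)) (y - x) :=
    ((hf.continuous_fderiv one_ne_zero).comp (by fun_prop)).clm_apply continuous_const
  rw [intervalIntegral.integral_eq_sub_of_hasDerivAt (fun t _ ↦ hderiv t)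
    (hcont.intervalIntegrable 0 1)]
  simp

variable [MeasurableSpace E] [BorelSpace E] {μ : Measure E} [μ.IsAddRightInvariant] [SFinite μ]

theorem integral_abs_sub_comp_sub_le_integral_abs_fderiv {f : E → ℝ} (hf : ContDiff ℝ 1 f)
    (a b : E) (hint : Integrable (fun v ↦ fderiv ℝ f v (b - a)) μ) :
    ∫ v, |f (v - a) - f (v - b)| ∂μ ≤ ∫ v, |fderiv ℝ f v (b - a)| ∂μ := by
  set g : E → ℝ → ℝ := fun v t ↦ fderiv ℝ f (v - b + t • (b - a)) (b - a)
  have hg : Continuous (Function.uncurry g) :=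
    ((hf.continuous_fderiv one_ne_zero).comp (by fun_prop)).clm_apply continuous_const
  have hpoint (v : E) : ‖f (v - a) - f (v - b)‖ₑ ≤ ∫⁻ t in Set.Ioc (0 : ℝ) 1, ‖g v t‖ₑ := by
    have h := sub_eq_integral_fderiv_segment hf (v - b) (v - a)
    rw [show v - a - (v - b) = b - a by abel, intervalIntegral.integral_of_le zero_le_one] at h
    rw [h]
    exact enorm_integral_le_lintegral_enorm _
  have hlint : ∫⁻ v, ‖f (v - a) - f (v - b)‖ₑ ∂μ ≤ ∫⁻ v, ‖fderiv ℝ f v (b - a)‖ₑ ∂μ :=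
    calc ∫⁻ v, ‖f (v - a) - f (v - b)‖ₑ ∂μ
        ≤ ∫⁻ v, (∫⁻ t in Set.Ioc (0 : ℝ) 1, ‖g v t‖ₑ) ∂μ := lintegral_mono hpoint
      _ = ∫⁻ t in Set.Ioc (0 : ℝ) 1, (∫⁻ v, ‖g v t‖ₑ ∂μ) :=
        lintegral_lintegral_swap hg.enorm.measurable.aemeasurable
      _ = ∫⁻ t in Set.Ioc (0 : ℝ) 1, (∫⁻ v, ‖fderiv ℝ f v (b - a)‖ₑ ∂μ) := by
        refine setLIntegral_congr_fun measurableSet_Ioc fun t _ ↦ ?_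
        have hshift (v : E) : v - b + t • (b - a) = v - (b - t • (b - a)) := by abel
        simp only [g, hshift]
        exact lintegral_sub_right_eq_self (fun v ↦ ‖fderiv ℝ f v (b - a)‖ₑ) (b - t • (b - a))
      _ = ∫⁻ v, ‖fderiv ℝ f v (b - a)‖ₑ ∂μ := by simp [Real.volume_Ioc]
  have hmeas : AEStronglyMeasurable (fun v ↦ f (v - a) - f (v - b)) μ :=
    (hf.continuous.comp (continuous_sub_right a)).sub
      (hf.continuous.comp (continuous_sub_right b)) |>.aestronglyMeasurable
  simp_rw [← Real.norm_eq_abs]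
  rw [integral_norm_eq_lintegral_enorm hmeas, integral_norm_eq_lintegral_enorm hint.1]
  exact ENNReal.toReal_mono hint.2.ne hlint

end Translation

section StdGaussian

variable {E : Type*} [NormedAddCommGroup E] [InnerProductSpace ℝ E] [FiniteDimensional ℝ E]
  [MeasurableSpace E] [BorelSpace E]

theorem integral_abs_inner_stdGaussian_le (w : E) : ∫ x, |⟪w, x⟫| ∂stdGaussian E ≤ ‖w‖ := by
  have hL : MemLp (innerSL ℝ w) 2 (stdGaussian E) :=
    IsGaussian.memLp_dual _ _ _ ENNReal.ofNat_ne_top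
  have hmean : (stdGaussian E)[innerSL ℝ w] = 0 := integral_strongDual_stdGaussian _
  have hsq : (stdGaussian E)[ |⇑(innerSL ℝ w)| ^ 2] = ‖w‖ ^ 2 := by
    change ∫ x, |innerSL ℝ w x| ^ 2 ∂stdGaussian E = _
    simp_rw [sq_abs]
    rw [← variance_of_integral_eq_zero hL.aemeasurable hmean, variance_dual_stdGaussian,
      innerSL_apply_norm]
  -- Cauchy–Schwarz, in the form `Var |⟪w, X⟫| ≥ 0`
  have hvar : 0 ≤ ‖w‖ ^ 2 - ((stdGaussian E)[ |⇑(innerSL ℝ w)|]) ^ 2 := by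
    rw [← hsq, ← variance_eq_sub hL.abs]
    exact variance_nonneg _ _
  change (stdGaussian E)[ |⇑(innerSL ℝ w)|] ≤ ‖w‖
  exact (pow_le_pow_iff_left₀ (integral_nonneg fun _ ↦ abs_nonneg _) (norm_nonneg w)
    two_ne_zero).1 (sub_nonneg.1 hvar)

end StdGaussian

section GaussDensity

variable {d : ℕ} {σ : ℝ}

theorem gaussDensity_nonneg (v : EuclideanSpace ℝ (Fin d)) : 0 ≤ gaussDensity d σ v := by
  unfold gaussDensity; positivity

theorem contDiff_gaussDensity {n : WithTop ℕ∞} : ContDiff ℝ n (gaussDensity d σ) := by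
  unfold gaussDensity
  exact contDiff_const.mul (((contDiff_norm_sq ℝ).neg.div_const _).exp)

theorem measurable_gaussDensity : Measurable (gaussDensity d σ) :=
  (contDiff_gaussDensity (n := 0)).continuous.measurable

theorem fderiv_gaussDensity_apply (v w : EuclideanSpace ℝ (Fin d)) :
    fderiv ℝ (gaussDensity d σ) v w = -(⟪v, w⟫ / σ ^ 2) * gaussDensity d σ v := by
  have hform : gaussDensity d σ = fun v ↦
      (2 * π * σ ^ 2) ^ (-(d : ℝ) / 2) * exp (‖v‖ ^ 2 * -(2 * σ ^ 2)⁻¹) := by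
    ext v; unfold gaussDensity; ring_nf
  have h := (((hasStrictFDerivAt_norm_sq v).hasFDerivAt.mul_const (-(2 * σ ^ 2)⁻¹)).exp).const_mul
    ((2 * π * σ ^ 2) ^ (-(d : ℝ) / 2))
  rw [hform, h.fderiv]
  simp only [smul_apply, smul_eq_mul, nsmul_eq_mul, innerSL_apply_apply]
  ring

theorem integrable_gaussDensity (hσ : σ ≠ 0) : Integrable (gaussDensity d σ) := by
  have h := (GaussianFourier.integrable_cexp_neg_mul_sq_norm_add (V := EuclideanSpace ℝ (Fin d))
    (b := ((2 * σ ^ 2)⁻¹ : ℝ)) (by norm_cast; positivity) 0 0).norm.const_mul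
    ((2 * π * σ ^ 2) ^ (-(d : ℝ) / 2))
  refine h.congr (ae_of_all _ fun v ↦ ?_)
  simp only [gaussDensity, zero_mul, add_zero, Complex.norm_exp, ← Complex.ofReal_pow,
    ← Complex.ofReal_neg, ← Complex.ofReal_mul, Complex.ofReal_re]
  ring_nf

theorem charFun_withDensity_gaussDensity (hσ : σ ≠ 0) (t : EuclideanSpace ℝ (Fin d)) :
    charFun (volume.withDensity fun v ↦ ENNReal.ofReal (gaussDensity d σ v)) t =
      Complex.exp (-(σ ^ 2 * ‖t‖ ^ 2) / 2) := by
  have hb : 0 < ((2 * σ ^ 2 : ℝ)⁻¹ : ℂ).re := by norm_cast; positivity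
  have hintegrand (x : EuclideanSpace ℝ (Fin d)) :
      (ENNReal.ofReal (gaussDensity d σ x)).toReal • Complex.exp (⟪x, t⟫ * Complex.I) =
        ((2 * π * σ ^ 2) ^ (-(d : ℝ) / 2) : ℝ) *
          Complex.exp (-((2 * σ ^ 2 : ℝ)⁻¹ : ℂ) * ‖x‖ ^ 2 + Complex.I * ⟪t, x⟫) := by
    rw [ENNReal.toReal_ofReal (gaussDensity_nonneg x), gaussDensity, real_inner_comm,
      Complex.real_smul, Complex.ofReal_mul, Complex.ofReal_exp, mul_assoc, ← Complex.exp_add]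
    push_cast
    ring_nf
  rw [charFun_apply, integral_withDensity_eq_integral_toReal_smul
    (measurable_gaussDensity (σ := σ)).ennreal_ofReal (ae_of_all _ fun _ ↦ ENNReal.ofReal_lt_top)]
  simp_rw [hintegrand]
  rw [integral_const_mul, GaussianFourier.integral_cexp_neg_mul_sq_norm_add hb,
    finrank_euclideanSpace_fin]
  have h2πσ : 0 < 2 * π * σ ^ 2 := by positivity
  have hbase : (π : ℂ) / ((2 * σ ^ 2 : ℝ) : ℂ)⁻¹ = ((2 * π * σ ^ 2 : ℝ) : ℂ) := by
    push_cast; field_simp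
  have hpow : ((2 * π * σ ^ 2 : ℝ) : ℂ) ^ ((d : ℂ) / 2) =
      ((2 * π * σ ^ 2) ^ ((d : ℝ) / 2) : ℝ) := by
    rw [Complex.ofReal_cpow h2πσ.le]; push_cast; rfl
  have hnormalize : (2 * π * σ ^ 2) ^ (-(d : ℝ) / 2) * (2 * π * σ ^ 2) ^ ((d : ℝ) / 2) = 1 := by
    rw [← Real.rpow_add h2πσ, neg_div, neg_add_cancel, Real.rpow_zero]
  have hexp : Complex.I ^ 2 * ‖t‖ ^ 2 / (4 * ((2 * σ ^ 2 : ℝ) : ℂ)⁻¹) =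
      -(σ ^ 2 * ‖t‖ ^ 2) / 2 := by
    push_cast; field_simp; rw [Complex.I_sq]; ring
  rw [hbase, hpow, hexp, ← mul_assoc, ← Complex.ofReal_mul, hnormalize, Complex.ofReal_one,
    one_mul]

theorem withDensity_gaussDensity (hσ : σ ≠ 0) :
    volume.withDensity (fun v ↦ ENNReal.ofReal (gaussDensity d σ v)) =
      (stdGaussian (EuclideanSpace ℝ (Fin d))).map (σ • ·) := by
  have := isFiniteMeasure_withDensity_ofReal (integrable_gaussDensity (d := d) hσ).2
  have := Measure.isFiniteMeasure_map (stdGaussian (EuclideanSpace ℝ (Fin d))) (σ • ·)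
  refine Measure.ext_of_charFun (funext fun t ↦ ?_)
  have hnorm : ‖σ • t‖ ^ 2 = σ ^ 2 * ‖t‖ ^ 2 := by
    rw [norm_smul, mul_pow, Real.norm_eq_abs, sq_abs]
  rw [charFun_withDensity_gaussDensity hσ, charFun_map_smul, charFun_stdGaussian]
  simp only [← Complex.ofReal_pow, hnorm]
  push_cast
  ring_nf

theorem integral_mul_gaussDensity (hσ : σ ≠ 0) (g : EuclideanSpace ℝ (Fin d) → ℝ) :
    ∫ v, g v * gaussDensity d σ v = ∫ x, g (σ • x) ∂stdGaussian (EuclideanSpace ℝ (Fin d)) := by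
  rw [← (measurableEmbedding_const_smul₀ hσ).integral_map g, ← withDensity_gaussDensity hσ,
    integral_withDensity_eq_integral_toReal_smul (measurable_gaussDensity (σ := σ)).ennreal_ofReal
      (ae_of_all _ fun _ ↦ ENNReal.ofReal_lt_top)]
  simp_rw [ENNReal.toReal_ofReal (gaussDensity_nonneg _), smul_eq_mul, mul_comm]

theorem integrable_mul_gaussDensity_iff (hσ : σ ≠ 0) {g : EuclideanSpace ℝ (Fin d) → ℝ} :
    Integrable (fun v ↦ g v * gaussDensity d σ v) ↔
      Integrable (fun x ↦ g (σ • x)) (stdGaussian (EuclideanSpace ℝ (Fin d))) := by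
  have h := integrable_withDensity_iff_integrable_smul' (g := g)
    (measurable_gaussDensity (σ := σ)).ennreal_ofReal
    (ae_of_all volume fun _ ↦ ENNReal.ofReal_lt_top)
  rw [withDensity_gaussDensity hσ, (measurableEmbedding_const_smul₀ hσ).integrable_map_iff] at h
  simp_rw [ENNReal.toReal_ofReal (gaussDensity_nonneg _), smul_eq_mul, mul_comm _ (g _)] at h
  exact h.symm

theorem integrable_fderiv_gaussDensity_apply (hσ : σ ≠ 0) (w : EuclideanSpace ℝ (Fin d)) :
    Integrable (fun v ↦ fderiv ℝ (gaussDensity d σ) v w) := by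
  simp_rw [fderiv_gaussDensity_apply]
  refine (integrable_mul_gaussDensity_iff hσ).2 ?_
  refine ((IsGaussian.integrable_dual _ (innerSL ℝ w)).const_mul (-σ⁻¹)).congr
    (ae_of_all _ fun x ↦ ?_)
  simp only [innerSL_apply_apply, real_inner_smul_right, real_inner_comm w]
  field_simp

theorem integral_abs_fderiv_gaussDensity_apply_le (hσ : σ ≠ 0) (w : EuclideanSpace ℝ (Fin d)) :
    ∫ v, |fderiv ℝ (gaussDensity d σ) v w| ≤ ‖w‖ / |σ| := by
  simp_rw [fderiv_gaussDensity_apply, abs_mul, abs_of_nonneg (gaussDensity_nonneg _)]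
  rw [integral_mul_gaussDensity hσ]
  have hscale (x : EuclideanSpace ℝ (Fin d)) :
      |-(⟪σ • x, w⟫ / σ ^ 2)| = |σ|⁻¹ * |⟪w, x⟫| := by
    rw [real_inner_smul_left, real_inner_comm, abs_neg, abs_div, abs_mul, abs_pow, sq]
    field_simp
  simp_rw [hscale]
  rw [integral_const_mul, div_eq_inv_mul]
  exact mul_le_mul_of_nonneg_left (integral_abs_inner_stdGaussian_le w) (by positivity)

end GaussDensity

/-- `L¹`-continuity of the Gaussian location family: for all shifts `θ, θ'`,
`∫ |h_σ(v − θ) − h_σ(v − θ')| dv ≤ (√d/σ)·‖θ − θ'‖`. -/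
theorem statement2 (d : ℕ) (hd : 1 ≤ d) (σ : ℝ) (hσ : 0 < σ)
    (θ θ' : EuclideanSpace ℝ (Fin d)) :
    ∫ v, |gaussDensity d σ (v - θ) - gaussDensity d σ (v - θ')| ≤
      Real.sqrt d / σ * ‖θ - θ'‖ := by
  have hsqrt : 1 ≤ Real.sqrt d := Real.one_le_sqrt.2 (by exact_mod_cast hd)
  calc ∫ v, |gaussDensity d σ (v - θ) - gaussDensity d σ (v - θ')|
      ≤ ∫ v, |fderiv ℝ (gaussDensity d σ) v (θ' - θ)| :=
        integral_abs_sub_comp_sub_le_integral_abs_fderiv contDiff_gaussDensity θ θ'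
          (integrable_fderiv_gaussDensity_apply hσ.ne' _)
    _ ≤ ‖θ' - θ‖ / |σ| := integral_abs_fderiv_gaussDensity_apply_le hσ.ne' _
    _ ≤ Real.sqrt d / σ * ‖θ - θ'‖ := by
      rw [abs_of_pos hσ, norm_sub_rev, div_mul_eq_mul_div, div_le_div_iff_of_pos_right hσ]
      exact le_mul_of_one_le_left (norm_nonneg _) hsqrt
end
end
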